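/- arXiv:2205.07788 — 4 statements merged into one kernel-verified Lean document; each statement's English description precedes it below -/
import Mathlib

section
/- Let v : Fin 5 → ℙ(K^4) satisfy π(v)(I) = min(|I|, 3) for every I ⊆ Fin 5. Then there exist scalars p_0, p_1, p_2 ∈ K with p_0 p_1 p_2 (p_0 − p_1)(p_1 − p_2)(p_2 − p_0) ≠ 0 and a linear automorphism g of K^4 such that v_0 = g[e_0], v_1 = g[e_1], v_2 = g[e_2], v_3 = g[e_0 + e_1 + e_2], and v_4 = g[p_0 e_0 + p_1 e_1 + p_2 e_2]. -/
open scoped LinearAlgebra.Projectivization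

/-- The subspace of `Fin n → K` spanned by the lines `v i` for `i ∈ I`. -/
noncomputable def spanV {K : Type*} [Field K] {n m : ℕ}
    (v : Fin m → ℙ K (Fin n → K)) (I : Finset (Fin m)) : Submodule K (Fin n → K) :=
  ⨆ i ∈ I, (v i).submodule

/-- The rank matrix of a tuple of points in projective space. -/
noncomputable def rankMatrix {K : Type*} [Field K] {n m : ℕ}
    (v : Fin m → ℙ K (Fin n → K)) (I : Finset (Fin m)) : ℕ :=
  Module.finrank K (spanV v I)

lemma ne_zero_of_apply_ne_zero {K : Type*} [Field K] {n : ℕ} {u : Fin n → K} {i : Fin n}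
    (h : u i ≠ 0) : u ≠ 0 := fun h0 => h (by rw [h0]; rfl)

/-!
Let `u i` represent `v i`. Any three of the `u i` are linearly independent, and `u 3`, `u 4` lie
in the span of `u 0, u 1, u 2`: write `u 3 = ∑ aᵢ • u i` and `u 4 = ∑ qᵢ • u i`. Independence of
`u j, u k, u 3` forces `aᵢ ≠ 0`, likewise `qᵢ ≠ 0`, and with `pᵢ = qᵢ / aᵢ` a coincidence `pᵢ = pⱼ`
would make `u 4 - pᵢ • u 3` a multiple of `u k`, against independence of `u k, u 3, u 4`.
Then `g` sends `eᵢ` to `aᵢ • u i` for `i < 3`, and `e₃` to any vector completing a basis.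
-/

section LinearAlgebra

variable {K V : Type*} [Field K] [AddCommGroup V] [Module K V] {x y z t s : V}

theorem LinearIndependent.eq_zero_of_smul_add_smul_add_smul_eq_zero
    (h : LinearIndependent K ![x, y, z]) {a b c : K} (habc : a • x + b • y + c • z = 0) :
    a = 0 ∧ b = 0 ∧ c = 0 := by
  have := Fintype.linearIndependent_iff.mp h ![a, b, c] (by simpa [Fin.sum_univ_three] using habc)
  exact ⟨this 0, this 1, this 2⟩

theorem mem_span_range_three_iff :
    t ∈ Submodule.span K (Set.range ![x, y, z]) ↔ ∃ a b c : K, a • x + b • y + c • z = t := by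
  rw [Submodule.mem_span_range_iff_exists_fun]
  constructor
  · rintro ⟨f, rfl⟩
    exact ⟨f 0, f 1, f 2, by simp [Fin.sum_univ_three]⟩
  · rintro ⟨a, b, c, rfl⟩
    exact ⟨![a, b, c], by simp [Fin.sum_univ_three]⟩

theorem coeff_ne_zero_of_linearIndependent {a b c : K} (h : LinearIndependent K ![y, z, t])
    (ht : a • x + b • y + c • z = t) : a ≠ 0 := by
  rintro rfl
  have := (h.eq_zero_of_smul_add_smul_add_smul_eq_zero
    (a := b) (b := c) (c := -1) (by rw [← ht]; module)).2.2
  exact absurd this (by norm_num)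

theorem coeffs_ne_zero_of_linearIndependent {a b c : K} (hx : LinearIndependent K ![y, z, t])
    (hy : LinearIndependent K ![x, z, t]) (hz : LinearIndependent K ![x, y, t])
    (ht : a • x + b • y + c • z = t) : a ≠ 0 ∧ b ≠ 0 ∧ c ≠ 0 :=
  ⟨coeff_ne_zero_of_linearIndependent hx ht,
    coeff_ne_zero_of_linearIndependent hy (by rw [← ht]; abel : b • y + a • x + c • z = t),
    coeff_ne_zero_of_linearIndependent hz (by rw [← ht]; abel : c • z + a • x + b • y = t)⟩

theorem div_ne_div_of_linearIndependent {a b c q r r' : K} (ha : a ≠ 0) (hb : b ≠ 0)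
    (h : LinearIndependent K ![z, t, s]) (ht : a • x + b • y + c • z = t)
    (hs : q • x + r • y + r' • z = s) : q / a ≠ r / b := by
  intro hqr
  have := (h.eq_zero_of_smul_add_smul_add_smul_eq_zero
    (a := r' - q / a * c) (b := q / a) (c := -1) ?_).2.2
  · exact absurd this (by norm_num)
  · rw [← ht, ← hs]
    match_scalars <;> field_simp <;> grind

theorem div_ne_div_of_linearIndependent₃ {a b c q r r' : K} (ha : a ≠ 0) (hb : b ≠ 0)
    (hc : c ≠ 0) (hx : LinearIndependent K ![x, t, s]) (hy : LinearIndependent K ![y, t, s])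
    (hz : LinearIndependent K ![z, t, s]) (ht : a • x + b • y + c • z = t)
    (hs : q • x + r • y + r' • z = s) : q / a ≠ r / b ∧ r / b ≠ r' / c ∧ r' / c ≠ q / a :=
  ⟨div_ne_div_of_linearIndependent ha hb hz ht hs,
    div_ne_div_of_linearIndependent hb hc hx (by rw [← ht]; abel : b • y + c • z + a • x = t)
      (by rw [← hs]; abel : r • y + r' • z + q • x = s),
    div_ne_div_of_linearIndependent hc ha hy (by rw [← ht]; abel : c • z + a • x + b • y = t)
      (by rw [← hs]; abel : r' • z + q • x + r • y = s)⟩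

theorem exists_normal_form_of_linearIndependent {u : Fin 5 → V}
    (hind : ∀ i j k : Fin 5, ({i, j, k} : Finset (Fin 5)).card = 3 →
      LinearIndependent K ![u i, u j, u k])
    (h3 : u 3 ∈ Submodule.span K (Set.range ![u 0, u 1, u 2]))
    (h4 : u 4 ∈ Submodule.span K (Set.range ![u 0, u 1, u 2])) :
    ∃ a₀ a₁ a₂ p₀ p₁ p₂ : K, a₀ ≠ 0 ∧ a₁ ≠ 0 ∧ a₂ ≠ 0 ∧
      p₀ * p₁ * p₂ * (p₀ - p₁) * (p₁ - p₂) * (p₂ - p₀) ≠ 0 ∧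
      a₀ • u 0 + a₁ • u 1 + a₂ • u 2 = u 3 ∧
      p₀ • a₀ • u 0 + p₁ • a₁ • u 1 + p₂ • a₂ • u 2 = u 4 := by
  obtain ⟨a₀, a₁, a₂, h3⟩ := mem_span_range_three_iff.mp h3
  obtain ⟨q₀, q₁, q₂, h4⟩ := mem_span_range_three_iff.mp h4
  obtain ⟨ha₀, ha₁, ha₂⟩ :=
    coeffs_ne_zero_of_linearIndependent (hind 1 2 3 rfl) (hind 0 2 3 rfl) (hind 0 1 3 rfl) h3
  obtain ⟨hq₀, hq₁, hq₂⟩ :=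
    coeffs_ne_zero_of_linearIndependent (hind 1 2 4 rfl) (hind 0 2 4 rfl) (hind 0 1 4 rfl) h4
  obtain ⟨h₀₁, h₁₂, h₂₀⟩ := div_ne_div_of_linearIndependent₃ ha₀ ha₁ ha₂
    (hind 0 3 4 rfl) (hind 1 3 4 rfl) (hind 2 3 4 rfl) h3 h4
  refine ⟨a₀, a₁, a₂, q₀ / a₀, q₁ / a₁, q₂ / a₂, ha₀, ha₁, ha₂, ?_, h3, ?_⟩
  · simp [sub_eq_zero, *]
  · rw [← h4]
    simp only [smul_smul, div_mul_cancel₀ _ ha₀, div_mul_cancel₀ _ ha₁, div_mul_cancel₀ _ ha₂]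

theorem exists_linearEquiv_apply_snoc_zero [FiniteDimensional K V] {n : ℕ}
    (hV : Module.finrank K V = n + 1) {w : Fin n → V} (hw : LinearIndependent K w) :
    ∃ g : (Fin (n + 1) → K) ≃ₗ[K] V, ∀ c : Fin n → K, g (Fin.snoc c 0) = ∑ i, c i • w i := by
  obtain ⟨x, hx⟩ := exists_linearIndependent_snoc_of_lt_finrank hw (by omega)
  let B := basisOfLinearIndependentOfCardEqFinrank hx (by simp [hV])
  refine ⟨B.equivFun.symm, fun c => ?_⟩
  simp [B, Module.Basis.equivFun_symm_apply, Fin.sum_univ_castSucc]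

end LinearAlgebra

theorem Projectivization.eq_mk_of_eq_smul_rep {K V : Type*} [DivisionRing K] [AddCommGroup V]
    [Module K V] {p : ℙ K V} {x : V} (hx : x ≠ 0) (c : K) (h : c • p.rep = x) :
    p = Projectivization.mk K x hx :=
  (((Projectivization.mk_eq_mk_iff' K _ _ hx p.rep_nonzero).mpr ⟨c, h⟩).trans p.mk_rep).symm

section RankMatrix

variable {K : Type*} [Field K] {n m : ℕ} (v : Fin m → ℙ K (Fin n → K))

theorem spanV_mono {I J : Finset (Fin m)} (hIJ : I ⊆ J) : spanV v I ≤ spanV v J :=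
  biSup_mono fun _ hi => hIJ hi

theorem spanV_triple (i j k : Fin m) :
    spanV v {i, j, k} = Submodule.span K (Set.range ![(v i).rep, (v j).rep, (v k).rep]) := by
  rw [spanV, Finset.iSup_insert, Finset.iSup_insert, Finset.iSup_singleton]
  simp only [Projectivization.submodule_eq, Matrix.range_cons, Matrix.range_empty,
    Set.union_empty, Set.singleton_union, Submodule.span_insert]

theorem linearIndependent_rep_of_rankMatrix_eq_three {i j k : Fin m}
    (h : rankMatrix v {i, j, k} = 3) :
    LinearIndependent K ![(v i).rep, (v j).rep, (v k).rep] := by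
  rw [rankMatrix, spanV_triple] at h
  rw [linearIndependent_iff_card_eq_finrank_span, Set.finrank, h, Fintype.card_fin]

theorem rep_mem_spanV_of_rankMatrix_insert_eq {l : Fin m} {I : Finset (Fin m)}
    (h : rankMatrix v (insert l I) = rankMatrix v I) : (v l).rep ∈ spanV v I := by
  have heq : spanV v I = spanV v (insert l I) :=
    Submodule.eq_of_le_of_finrank_eq (spanV_mono v (Finset.subset_insert l I)) h.symm
  rw [heq, spanV]
  refine (le_biSup (fun i => (v i).submodule) (Finset.mem_insert_self l I)) ?_
  rw [Projectivization.submodule_eq]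
  exact Submodule.mem_span_singleton_self _

end RankMatrix

/-- a quintuple with rank matrix `I ↦ min |I| 3` is, up to `GL_4`, of the form
`(g[e₀], g[e₁], g[e₂], g[e₀+e₁+e₂], g[p₀e₀+p₁e₁+p₂e₂])` with `p` generic. -/
theorem rank_5_10_normal_form (K : Type*) [Field K]
    (v : Fin 5 → ℙ K (Fin 4 → K))
    (h : ∀ I : Finset (Fin 5), rankMatrix v I = min I.card 3) :
    ∃ p₀ p₁ p₂ : K, ∃ hp : p₀ * p₁ * p₂ * (p₀ - p₁) * (p₁ - p₂) * (p₂ - p₀) ≠ 0,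
      ∃ g : (Fin 4 → K) ≃ₗ[K] (Fin 4 → K),
        v 0 = Projectivization.mk K (g ![1,0,0,0])
            (g.map_ne_zero_iff.mpr (ne_zero_of_apply_ne_zero (i := 0) (by norm_num))) ∧
        v 1 = Projectivization.mk K (g ![0,1,0,0])
            (g.map_ne_zero_iff.mpr (ne_zero_of_apply_ne_zero (i := 1) (by norm_num))) ∧
        v 2 = Projectivization.mk K (g ![0,0,1,0])
            (g.map_ne_zero_iff.mpr (ne_zero_of_apply_ne_zero (i := 2) (by first | exact one_ne_zero | (show (1 : K) ≠ 0; exact one_ne_zero) | (simp; done) | (norm_num; done)))) ∧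
        v 3 = Projectivization.mk K (g ![1,1,1,0])
            (g.map_ne_zero_iff.mpr (ne_zero_of_apply_ne_zero (i := 0) (by norm_num))) ∧
        v 4 = Projectivization.mk K (g ![p₀,p₁,p₂,0])
            (g.map_ne_zero_iff.mpr (ne_zero_of_apply_ne_zero (i := 0) (by
              simpa using left_ne_zero_of_mul (left_ne_zero_of_mul (left_ne_zero_of_mul
                (left_ne_zero_of_mul (left_ne_zero_of_mul hp))))))) := by
  have hind (i j k : Fin 5) (hijk : ({i, j, k} : Finset (Fin 5)).card = 3) :=
    linearIndependent_rep_of_rankMatrix_eq_three v (by rw [h, hijk]; rfl)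
  have hmem (l : Fin 5) (hl : l = 3 ∨ l = 4) : (v l).rep ∈ spanV v {0, 1, 2} :=
    rep_mem_spanV_of_rankMatrix_insert_eq v (by rw [h, h]; rcases hl with rfl | rfl <;> rfl)
  simp only [spanV_triple] at hmem
  obtain ⟨a₀, a₁, a₂, p₀, p₁, p₂, ha₀, ha₁, ha₂, hp, h3, h4⟩ :=
    exists_normal_form_of_linearIndependent hind (hmem 3 (.inl rfl)) (hmem 4 (.inr rfl))
  have hw : LinearIndependent K ![a₀ • (v 0).rep, a₁ • (v 1).rep, a₂ • (v 2).rep] := by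
    convert (hind 0 1 2 rfl).units_smul ![Units.mk0 a₀ ha₀, Units.mk0 a₁ ha₁, Units.mk0 a₂ ha₂]
    ext i : 1; fin_cases i <;> rfl
  obtain ⟨g, hg⟩ := exists_linearEquiv_apply_snoc_zero (by simp) hw
  have hg' (c₀ c₁ c₂ : K) : g ![c₀, c₁, c₂, 0] =
      c₀ • a₀ • (v 0).rep + c₁ • a₁ • (v 1).rep + c₂ • a₂ • (v 2).rep := by
    rw [show (![c₀, c₁, c₂, 0] : Fin 4 → K) = Fin.snoc ![c₀, c₁, c₂] 0 by
      ext i; fin_cases i <;> rfl, hg]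
    simp [Fin.sum_univ_three, add_assoc]
  refine ⟨p₀, p₁, p₂, hp, g, ?_, ?_, ?_, ?_, ?_⟩
  · exact Projectivization.eq_mk_of_eq_smul_rep _ a₀ (by simp [hg'])
  · exact Projectivization.eq_mk_of_eq_smul_rep _ a₁ (by simp [hg'])
  · exact Projectivization.eq_mk_of_eq_smul_rep _ a₂ (by simp [hg'])
  · exact Projectivization.eq_mk_of_eq_smul_rep _ 1 (by simpa [hg'] using h3.symm)
  · exact Projectivization.eq_mk_of_eq_smul_rep _ 1 (by rw [hg', one_smul, h4])
end

section
/- Let v : Fin 5 → ℙ(K^4) satisfy π(v)(I) = |I ∩ {0}| + min(|I \ {0}|, 2) for every I ⊆ Fin 5. Then there exist scalars p_0, p_1 ∈ K with p_0 p_1 (p_0 − p_1) ≠ 0 and a linear automorphism g of K^4 such that v_0 = g[e_2], v_1 = g[e_0], v_2 = g[e_1], v_3 = g[e_0 + e_1], and v_4 = g[p_0 e_0 + p_1 e_1]. -/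
open scoped LinearAlgebra.Projectivization

/-! The rank conditions say that `v 1, …, v 4` are pairwise distinct points on the line spanned by
`v 1` and `v 2`, and that `v 0` lies off that line. If `v 3 = [a x + b y]` for representatives
`x, y` of `v 1, v 2`, then `f₀ = a x` and `f₁ = b y` represent `v 1, v 2` with `v 3 = [f₀ + f₁]`,
and `v 4 = [p₀ f₀ + p₁ f₁]`, where `p₀ p₁ ≠ 0` because `v 4 ∉ {v 1, v 2}` and `p₀ ≠ p₁` because
`v 4 ≠ v 3`. As `f₀, f₁` and a representative of `v 0` are independent, some automorphism of `K⁴`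
sends `e₀, e₁, e₂` to them. -/

namespace Projectivization

variable {K V : Type*} [Field K] [AddCommGroup V] [Module K V]

theorem rep_mem_submodule (P : ℙ K V) : P.rep ∈ P.submodule :=
  P.submodule_eq ▸ Submodule.mem_span_singleton_self P.rep

theorem submodule_le_iff_rep_mem (P : ℙ K V) (S : Submodule K V) :
    P.submodule ≤ S ↔ P.rep ∈ S := by
  rw [P.submodule_eq, Submodule.span_singleton_le_iff_mem]

theorem eq_mk_of_mem_submodule {P : ℙ K V} {u : V} (hu : u ≠ 0) (h : u ∈ P.submodule) :
    P = mk K u hu := by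
  obtain ⟨a, rfl⟩ := Submodule.mem_span_singleton.mp (P.submodule_eq ▸ h)
  have ha : a ≠ 0 := left_ne_zero_of_smul hu
  conv_lhs => rw [← P.mk_rep]
  exact (mk_eq_mk_iff' K _ _ _ _).mpr ⟨a⁻¹, inv_smul_smul₀ ha _⟩

theorem eq_of_rep_mem_submodule {P Q : ℙ K V} (h : P.rep ∈ Q.submodule) : P = Q :=
  P.mk_rep.symm.trans (eq_mk_of_mem_submodule P.rep_nonzero h).symm

theorem linearIndependent_pair_of_mem_submodule {P Q : ℙ K V} (hPQ : P ≠ Q) {u w : V}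
    (hu : u ≠ 0) (huP : u ∈ P.submodule) (hw : w ≠ 0) (hwQ : w ∈ Q.submodule) :
    LinearIndependent K ![u, w] := by
  refine (LinearIndependent.pair_iff' hu).mpr fun a hau => hPQ ?_
  have hwP : w ∈ P.submodule := hau ▸ P.submodule.smul_mem a huP
  rw [eq_mk_of_mem_submodule hw hwP, eq_mk_of_mem_submodule hw hwQ]

theorem linearIndependent_triple_of_notMem_sup {P₁ P₂ : ℙ K V} (h₁₂ : P₁ ≠ P₂) {f₀ f₁ u : V}
    (hf₀ : f₀ ∈ P₁.submodule) (hf₀0 : f₀ ≠ 0) (hf₁ : f₁ ∈ P₂.submodule) (hf₁0 : f₁ ≠ 0)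
    (hu : u ∉ P₁.submodule ⊔ P₂.submodule) : LinearIndependent K ![f₀, f₁, u] := by
  rw [show ![f₀, f₁, u] = Fin.snoc ![f₀, f₁] u by ext i; fin_cases i <;> rfl,
    linearIndependent_finSnoc]
  refine ⟨linearIndependent_pair_of_mem_submodule h₁₂ hf₀0 hf₀ hf₁0 hf₁, fun hmem => hu ?_⟩
  refine Submodule.span_le.mpr ?_ hmem
  rintro _ ⟨i, rfl⟩
  fin_cases i
  exacts [Submodule.mem_sup_left hf₀, Submodule.mem_sup_right hf₁]

theorem exists_smul_add_smul_eq_rep {P₁ P₂ P : ℙ K V}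
    (hP : P.submodule ≤ P₁.submodule ⊔ P₂.submodule) :
    ∃ a b : K, a • P₁.rep + b • P₂.rep = P.rep := by
  have hmem := hP P.rep_mem_submodule
  rwa [P₁.submodule_eq, P₂.submodule_eq, ← Submodule.span_insert,
    Submodule.mem_span_pair] at hmem

theorem ne_zero_of_smul_add_smul_eq_rep {P₁ P₂ P : ℙ K V} {a b : K}
    (h : a • P₁.rep + b • P₂.rep = P.rep) (h₁ : P ≠ P₁) (h₂ : P ≠ P₂) : a ≠ 0 ∧ b ≠ 0 := by
  constructor <;> rintro rfl
  · refine h₂ (eq_of_rep_mem_submodule ?_)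
    rw [← h, zero_smul, zero_add]
    exact P₂.submodule.smul_mem b P₂.rep_mem_submodule
  · refine h₁ (eq_of_rep_mem_submodule ?_)
    rw [← h, zero_smul, add_zero]
    exact P₁.submodule.smul_mem a P₁.rep_mem_submodule

theorem exists_normalized_reps_of_le_sup {P₁ P₂ P₃ P₄ : ℙ K V}
    (h₃ : P₃.submodule ≤ P₁.submodule ⊔ P₂.submodule)
    (h₄ : P₄.submodule ≤ P₁.submodule ⊔ P₂.submodule)
    (h₃₁ : P₃ ≠ P₁) (h₃₂ : P₃ ≠ P₂) (h₄₁ : P₄ ≠ P₁) (h₄₂ : P₄ ≠ P₂) (h₄₃ : P₄ ≠ P₃) :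
    ∃ f₀ ∈ P₁.submodule, ∃ f₁ ∈ P₂.submodule, ∃ p₀ p₁ : K, f₀ ≠ 0 ∧ f₁ ≠ 0 ∧
      p₀ * p₁ * (p₀ - p₁) ≠ 0 ∧ f₀ + f₁ ∈ P₃.submodule ∧ p₀ • f₀ + p₁ • f₁ ∈ P₄.submodule := by
  obtain ⟨a, b, hab⟩ := exists_smul_add_smul_eq_rep h₃
  obtain ⟨c, d, hcd⟩ := exists_smul_add_smul_eq_rep h₄
  obtain ⟨ha, hb⟩ := ne_zero_of_smul_add_smul_eq_rep hab h₃₁ h₃₂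
  obtain ⟨hc, hd⟩ := ne_zero_of_smul_add_smul_eq_rep hcd h₄₁ h₄₂
  have hP₄ : (c / a) • (a • P₁.rep) + (d / b) • (b • P₂.rep) = P₄.rep := by
    rw [smul_smul, smul_smul, div_mul_cancel₀ c ha, div_mul_cancel₀ d hb, hcd]
  have hp : c / a ≠ d / b := fun hp => h₄₃ <| eq_of_rep_mem_submodule <| by
    rw [← hP₄, hp, ← smul_add, hab]
    exact P₃.submodule.smul_mem _ P₃.rep_mem_submodule
  exact ⟨a • P₁.rep, P₁.submodule.smul_mem a P₁.rep_mem_submodule,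
    b • P₂.rep, P₂.submodule.smul_mem b P₂.rep_mem_submodule, c / a, d / b,
    smul_ne_zero ha P₁.rep_nonzero, smul_ne_zero hb P₂.rep_nonzero,
    mul_ne_zero (mul_ne_zero (div_ne_zero hc ha) (div_ne_zero hd hb)) (sub_ne_zero.mpr hp),
    hab ▸ P₃.rep_mem_submodule, hP₄ ▸ P₄.rep_mem_submodule⟩

end Projectivization

theorem exists_linearEquiv_pi_single_castSucc {K V : Type*} [Field K] [AddCommGroup V]
    [Module K V] {n : ℕ} (hV : Module.finrank K V = n + 1) {f : Fin n → V}
    (hf : LinearIndependent K f) :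
    ∃ g : (Fin (n + 1) → K) ≃ₗ[K] V, ∀ i, g (Pi.single i.castSucc 1) = f i := by
  have : Module.Finite K V := Module.finite_of_finrank_eq_succ hV
  obtain ⟨w, hw⟩ : ∃ w, w ∉ Submodule.span K (Set.range f) := by
    by_contra! hall
    have hle := finrank_range_le_card (R := K) f
    rw [Set.finrank, Submodule.eq_top_iff'.mpr hall, finrank_top, hV, Fintype.card_fin] at hle
    omega
  have hcard : Fintype.card (Fin (n + 1)) = Module.finrank K V := by simp [hV]
  have hli := linearIndependent_finSnoc.mpr ⟨hf, hw⟩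
  refine ⟨(Pi.basisFun K _).equiv (basisOfLinearIndependentOfCardEqFinrank hli hcard)
    (Equiv.refl _), fun i => ?_⟩
  rw [← Pi.basisFun_apply, Module.Basis.equiv_apply, Equiv.refl_apply,
    coe_basisOfLinearIndependentOfCardEqFinrank, Fin.snoc_castSucc]

section rankMatrix

variable {K : Type*} [Field K] {n m : ℕ} (v : Fin m → ℙ K (Fin n → K))

theorem spanV_insert (i : Fin m) (I : Finset (Fin m)) :
    spanV v (insert i I) = (v i).submodule ⊔ spanV v I :=
  Finset.iSup_insert _ _ _

theorem spanV_singleton (i : Fin m) : spanV v {i} = (v i).submodule := by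
  simp [spanV]

theorem rankMatrix_insert_eq_iff (k : Fin m) (I : Finset (Fin m)) :
    rankMatrix v (insert k I) = rankMatrix v I ↔ (v k).submodule ≤ spanV v I := by
  rw [rankMatrix, rankMatrix, spanV_insert]
  refine ⟨fun h => ?_, fun h => by rw [sup_eq_right.mpr h]⟩
  exact le_sup_left.trans (Submodule.eq_of_le_of_finrank_eq le_sup_right h.symm).ge

theorem ne_of_rankMatrix_pair_eq_two {i j : Fin m} (h : rankMatrix v {i, j} = 2) :
    v i ≠ v j := by
  intro hij
  rw [rankMatrix, spanV_insert, spanV_singleton, hij, sup_idem,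
    Projectivization.finrank_submodule] at h
  exact absurd h (by decide)

end rankMatrix

/-- normal form for quintuples of rank type (5,5). -/
theorem rank_5_5_normal_form (K : Type*) [Field K]
    (v : Fin 5 → ℙ K (Fin 4 → K))
    (h : ∀ I : Finset (Fin 5), rankMatrix v I = (I ∩ {0}).card + min (I \ {0}).card 2) :
    ∃ p₀ p₁ : K, ∃ hp : p₀ * p₁ * (p₀ - p₁) ≠ 0,
      ∃ g : (Fin 4 → K) ≃ₗ[K] (Fin 4 → K),
        v 0 = Projectivization.mk K (g ![0,0,1,0])
            (g.map_ne_zero_iff.mpr (ne_zero_of_apply_ne_zero (i := 2) (by show (1 : K) ≠ 0; exact one_ne_zero))) ∧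
        v 1 = Projectivization.mk K (g ![1,0,0,0])
            (g.map_ne_zero_iff.mpr (ne_zero_of_apply_ne_zero (i := 0) (by norm_num))) ∧
        v 2 = Projectivization.mk K (g ![0,1,0,0])
            (g.map_ne_zero_iff.mpr (ne_zero_of_apply_ne_zero (i := 1) (by norm_num))) ∧
        v 3 = Projectivization.mk K (g ![1,1,0,0])
            (g.map_ne_zero_iff.mpr (ne_zero_of_apply_ne_zero (i := 0) (by norm_num))) ∧
        v 4 = Projectivization.mk K (g ![p₀,p₁,0,0])
            (g.map_ne_zero_iff.mpr (ne_zero_of_apply_ne_zero (i := 0) (by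
              simpa using left_ne_zero_of_mul (left_ne_zero_of_mul hp)))) := by
  have hne : ∀ {i j : Fin 5}, rankMatrix v {i, j} = 2 → v i ≠ v j :=
    ne_of_rankMatrix_pair_eq_two v
  have hline : spanV v {1, 2} = (v 1).submodule ⊔ (v 2).submodule := by
    rw [spanV_insert, spanV_singleton]
  have h₃ : (v 3).submodule ≤ spanV v {1, 2} :=
    (rankMatrix_insert_eq_iff v 3 _).mp (by rw [h, h]; decide)
  have h₄ : (v 4).submodule ≤ spanV v {1, 2} :=
    (rankMatrix_insert_eq_iff v 4 _).mp (by rw [h, h]; decide)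
  have h₀ : (v 0).rep ∉ spanV v {1, 2} := by
    rw [← Projectivization.submodule_le_iff_rep_mem, ← rankMatrix_insert_eq_iff, h, h]
    decide
  rw [hline] at h₀ h₃ h₄
  obtain ⟨f₀, hf₀, f₁, hf₁, p₀, p₁, hf₀0, hf₁0, hp, hf₃, hf₄⟩ :=
    Projectivization.exists_normalized_reps_of_le_sup h₃ h₄ (hne (by rw [h]; decide))
      (hne (by rw [h]; decide)) (hne (by rw [h]; decide)) (hne (by rw [h]; decide))
      (hne (by rw [h]; decide))
  obtain ⟨g, hg⟩ := exists_linearEquiv_pi_single_castSucc (n := 3) (by simp) <|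
    Projectivization.linearIndependent_triple_of_notMem_sup (hne (by rw [h]; decide))
      hf₀ hf₀0 hf₁ hf₁0 h₀
  have hg' : ∀ a b c : K, g ![a, b, c, 0] = a • f₀ + b • f₁ + c • (v 0).rep := by
    intro a b c
    rw [show ![a, b, c, 0] = a • Pi.single 0 1 + b • Pi.single 1 1 + c • Pi.single 2 1 by
      ext i; fin_cases i <;> simp]
    simp only [map_add, map_smul]
    exact congr(a • $(hg 0) + b • $(hg 1) + c • $(hg 2))
  refine ⟨p₀, p₁, hp, g, ?_, ?_, ?_, ?_, ?_⟩ <;>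
    refine Projectivization.eq_mk_of_mem_submodule _ ?_ <;>
    simp [hg', hf₀, hf₁, hf₃, hf₄, Projectivization.rep_mem_submodule]
end

section
/- Let v : Fin m → ℙ(K^n), let φ = π(v) be its rank matrix, and let J ⊆ Fin m be a subset such that φ(J ∪ {i}) > φ(J) for every i ∉ J. Then there exists w : Fin m → ℙ(K^n) whose rank matrix is the reduction of φ by J, i.e. π(w)(I) = φ(I ∪ J) + φ(I ∩ J) − φ(J) for every I ⊆ Fin m. -/
open scoped LinearAlgebra.Projectivization

lemma spanV_eq_sup {K : Type*} [Field K] {n m : ℕ}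
    (v : Fin m → ℙ K (Fin n → K)) (I : Finset (Fin m)) :
    spanV v I = I.sup (fun i => (v i).submodule) :=
  (Finset.sup_eq_iSup _ _).symm

lemma spanV_mono_s15 {K : Type*} [Field K] {n m : ℕ}
    (v : Fin m → ℙ K (Fin n → K)) {I I' : Finset (Fin m)} (h : I ⊆ I') :
    spanV v I ≤ spanV v I' := by
  rw [spanV_eq_sup, spanV_eq_sup]
  exact Finset.sup_mono h

lemma spanV_union {K : Type*} [Field K] {n m : ℕ}
    (v : Fin m → ℙ K (Fin n → K)) (I I' : Finset (Fin m)) :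
    spanV v (I ∪ I') = spanV v I ⊔ spanV v I' := by
  rw [spanV_eq_sup, spanV_eq_sup, spanV_eq_sup, Finset.sup_union]

/-- if `J` is a face of the rank matrix `φ` of `v` (adding any point increases
the rank), then the reduction of `φ` by `J` is again the rank matrix of some tuple `w`. -/
theorem reduction_realizable (K : Type*) [Field K] [IsAlgClosed K] [CharZero K]
    {n m : ℕ} (v : Fin m → ℙ K (Fin n → K)) (J : Finset (Fin m))
    (hJ : ∀ i ∉ J, rankMatrix v J < rankMatrix v (insert i J)) :
    ∃ w : Fin m → ℙ K (Fin n → K), ∀ I : Finset (Fin m),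
      rankMatrix w I = rankMatrix v (I ∪ J) + rankMatrix v (I ∩ J) - rankMatrix v J := by
  classical
  set U := spanV v J with hU
  obtain ⟨W, hc⟩ := Submodule.exists_isCompl U
  set f : (Fin n → K) →ₗ[K] (Fin n → K) :=
    W.subtype.comp (Submodule.linearProjOfIsCompl W U hc.symm) with hf
  have hker : ∀ x, f x = 0 ↔ x ∈ U := by
    intro x
    simp only [hf, LinearMap.comp_apply, Submodule.subtype_apply,
      Submodule.coe_eq_zero]
    exact Submodule.linearProjOfIsCompl_apply_eq_zero_iff hc.symm
  have hmemW : ∀ x, f x ∈ W := fun x => (Submodule.linearProjOfIsCompl W U hc.symm x).2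
  have hidem : ∀ x, f (f x) = f x := by
    intro x
    simp only [hf, LinearMap.comp_apply, Submodule.subtype_apply]
    congr 1
    exact Submodule.linearProjOfIsCompl_apply_left hc.symm
      (Submodule.linearProjOfIsCompl W U hc.symm x)
  have hsub : ∀ x, x - f x ∈ U := by
    intro x
    rw [← hker, map_sub, hidem, sub_self]
  -- representatives outside J are not in U
  have hvi : ∀ i ∉ J, (v i).rep ∉ U := by
    intro i hi hrep
    have h1 : (v i).submodule ≤ U := by
      rw [Projectivization.submodule_eq]
      exact (Submodule.span_singleton_le_iff_mem _ _).mpr hrep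
    have h2 : spanV v (insert i J) = U := by
      rw [Finset.insert_eq, spanV_union, hU]
      have h3 : spanV v {i} = (v i).submodule := by
        rw [spanV_eq_sup]; simp
      rw [h3]
      exact sup_eq_right.mpr h1
    have h4 : rankMatrix v (insert i J) = rankMatrix v J := by
      unfold rankMatrix
      rw [h2, hU]
    exact absurd h4 (hJ i hi).ne'
  have hfne : ∀ i ∉ J, f ((v i).rep) ≠ 0 := by
    intro i hi h0
    exact hvi i hi ((hker _).mp h0)
  refine ⟨fun i => if h : i ∈ J then v i else
    Projectivization.mk K (f ((v i).rep)) (hfne i h), fun I => ?_⟩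
  set w : Fin m → ℙ K (Fin n → K) := fun i => if h : i ∈ J then v i else
    Projectivization.mk K (f ((v i).rep)) (hfne i h) with hw
  -- submodules of w
  have hwJ : ∀ i ∈ J, (w i).submodule = (v i).submodule := by
    intro i hi; simp [hw, hi]
  have hwJ' : ∀ i ∉ J, (w i).submodule = Submodule.map f (v i).submodule := by
    intro i hi
    rw [hw]
    simp only [dif_neg hi]
    rw [Projectivization.submodule_mk, Projectivization.submodule_eq,
      Submodule.map_span, Set.image_singleton]
  have hI' : (I ∩ J) ∪ (I \ J) = I := by
    ext x; simp only [Finset.mem_union, Finset.mem_inter, Finset.mem_sdiff]; tauto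
  -- decompose span of w over I
  have hspan1 : spanV w (I ∩ J) = spanV v (I ∩ J) := by
    rw [spanV_eq_sup, spanV_eq_sup]
    apply Finset.sup_congr rfl
    intro i hi
    exact hwJ i (Finset.mem_inter.mp hi).2
  have hspan2 : spanV w (I \ J) = Submodule.map f (spanV v (I \ J)) := by
    rw [spanV, spanV, Submodule.map_iSup]
    refine iSup_congr fun i => ?_
    rw [Submodule.map_iSup]
    exact iSup_congr fun hi => hwJ' i (Finset.mem_sdiff.mp hi).2
  have hspan : spanV w I = spanV v (I ∩ J) ⊔ Submodule.map f (spanV v (I \ J)) := by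
    conv_lhs => rw [← hI']
    rw [spanV_union, hspan1, hspan2]
  have hmapU : Submodule.map f U = ⊥ := by
    rw [Submodule.eq_bot_iff]
    rintro x ⟨y, hy, rfl⟩
    exact (hker y).mpr hy
  set C := spanV v (I ∪ J) with hC
  have hmap_eq : Submodule.map f (spanV v (I \ J)) = Submodule.map f C := by
    have h5 : (I \ J) ∪ J = I ∪ J := by
      ext x; simp only [Finset.mem_union, Finset.mem_sdiff]; tauto
    rw [hC, ← h5, spanV_union, Submodule.map_sup, ← hU, hmapU, sup_bot_eq]
  have hUC : U ≤ C := spanV_mono_s15 v Finset.subset_union_right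
  have hmapC_le : Submodule.map f C ≤ C := by
    rintro x ⟨y, hy, rfl⟩
    have h6 : f y = y - (y - f y) := by ring
    rw [h6]
    exact Submodule.sub_mem _ hy (hUC (hsub y))
  have hCdecomp : C = Submodule.map f C ⊔ U := by
    apply le_antisymm
    · intro x hx
      have h7 : x = f x + (x - f x) := by ring
      rw [h7]
      exact Submodule.add_mem _ (Submodule.mem_sup_left ⟨x, hx, rfl⟩)
        (Submodule.mem_sup_right (hsub x))
    · exact sup_le hmapC_le hUC
  have hmapC_W : Submodule.map f C ≤ W := by
    rintro x ⟨y, hy, rfl⟩; exact hmemW y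
  have hdisj : ∀ s t : Submodule K (Fin n → K), s ≤ U → t ≤ W → s ⊓ t = ⊥ := by
    intro s t hs ht
    rw [Submodule.eq_bot_iff]
    intro x hx
    exact (Submodule.mem_bot K).mp (hc.disjoint.le_bot ⟨hs hx.1, ht hx.2⟩)
  -- finrank of C
  have hrankC : Module.finrank K C
      = Module.finrank K (Submodule.map f C) + Module.finrank K U := by
    have hinf : Submodule.map f C ⊓ U = ⊥ := by
      rw [inf_comm]; exact hdisj U _ le_rfl hmapC_W
    have h8 := Submodule.finrank_sup_add_finrank_inf_eq (Submodule.map f C) U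
    rw [hinf, finrank_bot, add_zero] at h8
    conv_lhs => rw [hCdecomp]
    exact h8
  -- finrank of span of w
  have hBU : spanV v (I ∩ J) ≤ U := spanV_mono_s15 v Finset.inter_subset_right
  have hinf2 : spanV v (I ∩ J) ⊓ Submodule.map f C = ⊥ := hdisj _ _ hBU hmapC_W
  have hrankW : Module.finrank K (spanV w I) =
      Module.finrank K (spanV v (I ∩ J)) + Module.finrank K (Submodule.map f C) := by
    rw [hspan, hmap_eq]
    have h9 := Submodule.finrank_sup_add_finrank_inf_eq (spanV v (I ∩ J)) (Submodule.map f C)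
    rw [hinf2, finrank_bot, add_zero] at h9
    exact h9
  have hmono : Module.finrank K U ≤ Module.finrank K C := Submodule.finrank_mono hUC
  have e1 : rankMatrix w I
      = rankMatrix v (I ∩ J) + Module.finrank K (Submodule.map f C) := hrankW
  have e2 : rankMatrix v (I ∪ J)
      = Module.finrank K (Submodule.map f C) + rankMatrix v J := hrankC
  have e3 : rankMatrix v J ≤ rankMatrix v (I ∪ J) := hmono
  omega
end

section
/- Let p_0, p_1, q_0, q_1 ∈ K with p_0 p_1 (p_0 − p_1) ≠ 0, q_0 q_1 (q_0 − q_1) ≠ 0, and p_0 q_1 − p_1 q_0 ≠ 0, and let w : Fin 5 → (Fin 2 → K) with w_i ≠ 0 for every i. Then the five quantities q_0(p_1 − p_0)·d(1,3)·d(4,2) + p_0(q_1 − q_0)·d(1,4)·d(2,3), q_1(p_1 − p_0)·d(0,3)·d(4,2) + p_1(q_1 − q_0)·d(0,4)·d(2,3), p_0 q_1 · d(0,3)·d(4,1) + p_1 q_0 · d(0,4)·d(1,3), q_1 · d(0,2)·d(4,1) + q_0 · d(0,4)·d(1,2), and p_1 · d(0,2)·d(3,1) + p_0 · d(0,3)·d(1,2)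 all vanish if and only if either (a) there exist a linear automorphism g of K^2 and nonzero scalars c_0, …, c_4 ∈ K with w_0 = c_0 · g(e_0), w_1 = c_1 · g(e_1), w_2 = c_2 · g(e_0 + e_1), w_3 = c_3 · g(p_0 e_0 + p_1 e_1), w_4 = c_4 · g(q_0 e_0 + q_1 e_1), or (b) there exist four distinct indices i, j, k, l such that d(a,b) = 0 for every pair of distinct indices a, b taken from {i, j, k, l}. -/
/-!
A nonzero `w i` is a point of the projective line, and `d2 w i j = 0` says that `w i` and `w j`
are the same point. The `k`-th equation involves only the four points other than `w k` and says
that their cross-ratio is that of the corresponding points of `(e₀, e₁, e₀ + e₁, p, q)`; the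
hypotheses on `p` and `q` make these reference cross-ratios different from `0`, `1` and `∞`.

If the five points are distinct, the linear map `g` sending `e₀, e₁` to suitable multiples of
`w 0, w 1` also sends `e₀ + e₁` to a multiple of `w 2` (Cramer's rule), and the cross-ratio
equations of the quadruples `0, 1, 2, 3` and `0, 1, 2, 4` force `w 3 ∥ g p` and `w 4 ∥ g q`.
If two points coincide, the Plücker relation turns the equation of a quadruple containing them
into: each of the three splittings of that quadruple into two pairs has a coincident pair. So a
third point joins the two, and the same argument for the quadruple omitting one of these three
yields a fourth.
-/

/-- The 2×2 determinant of the columns `w i` and `w j`. -/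
def d2 {K : Type*} [Field K] {m : ℕ} (w : Fin m → Fin 2 → K) (i j : Fin m) : K :=
  w i 0 * w j 1 - w i 1 * w j 0

section Determinant
variable {K : Type*} [Field K] {m : ℕ}

theorem exists_smul_eq_of_det_eq_zero {u v : Fin 2 → K} (hv : v ≠ 0)
    (h : u 0 * v 1 - u 1 * v 0 = 0) : ∃ c : K, c • v = u := by
  have hv' : v 0 ≠ 0 ∨ v 1 ≠ 0 := by
    by_contra! h0
    exact hv (funext fun t => by fin_cases t <;> simp [h0.1, h0.2])
  rcases hv' with hv0 | hv1
  · refine ⟨u 0 / v 0, funext fun t => ?_⟩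
    fin_cases t
    · simp [hv0]
    · simp only [Fin.mk_one, Pi.smul_apply, smul_eq_mul]
      rw [div_mul_eq_mul_div, div_eq_iff hv0]; linear_combination h
  · refine ⟨u 1 / v 1, funext fun t => ?_⟩
    fin_cases t
    · simp only [Fin.zero_eta, Pi.smul_apply, smul_eq_mul]
      rw [div_mul_eq_mul_div, div_eq_iff hv1]; linear_combination -h
    · simp [hv1]

theorem d2_self (w : Fin m → Fin 2 → K) (i : Fin m) : d2 w i i = 0 := by
  simp only [d2]; ring

theorem d2_swap (w : Fin m → Fin 2 → K) (i j : Fin m) : d2 w j i = -d2 w i j := by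
  simp only [d2]; ring

theorem d2_eq_zero_iff_mk_eq {w : Fin m → Fin 2 → K} {i j : Fin m} (hi : w i ≠ 0)
    (hj : w j ≠ 0) :
    d2 w i j = 0 ↔ Projectivization.mk K (w i) hi = Projectivization.mk K (w j) hj := by
  rw [Projectivization.mk_eq_mk_iff']
  refine ⟨exists_smul_eq_of_det_eq_zero hj, ?_⟩
  rintro ⟨c, hc⟩
  simp only [d2, ← hc, Pi.smul_apply, smul_eq_mul]; ring

theorem d2_plucker (w : Fin m → Fin 2 → K) (a b c d : Fin m) :
    d2 w a b * d2 w c d + d2 w a c * d2 w d b + d2 w a d * d2 w b c = 0 := by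
  simp only [d2]; ring

theorem d2_smul_map (c : Fin m → K) (g : (Fin 2 → K) →ₗ[K] (Fin 2 → K))
    (v : Fin m → Fin 2 → K) (i j : Fin m) :
    d2 (fun k => c k • g (v k)) i j = c i * c j * (LinearMap.det g * d2 v i j) := by
  obtain ⟨M, rfl⟩ := Matrix.toLin'.surjective g
  simp only [d2, Matrix.toLin'_apply, Matrix.mulVec_fin_two, Pi.smul_apply, Matrix.cons_val_zero,
    Matrix.cons_val_one, Matrix.cons_val_fin_one, smul_eq_mul, LinearMap.det_toLin',
    Matrix.det_fin_two]
  ring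

theorem exists_linearEquiv_apply_eq (u v : Fin 2 → K) (h : u 0 * v 1 - u 1 * v 0 ≠ 0) :
    ∃ g : (Fin 2 → K) ≃ₗ[K] (Fin 2 → K), ∀ s, g s = s 0 • u + s 1 • v := by
  let M : Matrix (Fin 2) (Fin 2) K := !![u 0, v 0; u 1, v 1]
  have hM : LinearMap.det (Matrix.toLin' M) ≠ 0 := by
    rw [LinearMap.det_toLin', Matrix.det_fin_two_of]; contrapose! h; linear_combination h
  refine ⟨(Matrix.toLin' M).equivOfDetNeZero hM, fun s => ?_⟩
  change M.mulVec s = _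
  rw [Matrix.mulVec_fin_two]
  ext t
  fin_cases t <;>
  · simp only [M, Matrix.of_apply, Matrix.cons_val', Matrix.cons_val_zero, Matrix.cons_val_one,
      Matrix.cons_val_fin_one, Fin.zero_eta, Fin.mk_one, Fin.isValue, Pi.add_apply, Pi.smul_apply,
      smul_eq_mul]
    ring

theorem d2_mul_d2_eq_zero_of_card_compl_le_one {w : Fin m → Fin 2 → K} {S : Finset (Fin m)}
    (hS : Sᶜ.card ≤ 1) (hw : ∀ a b, a ∈ S → b ∈ S → a ≠ b → d2 w a b = 0) {a b c d : Fin m}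
    (hab : a ≠ b) (hac : a ≠ c) (had : a ≠ d) (hbc : b ≠ c) (hbd : b ≠ d) (hcd : c ≠ d) :
    d2 w a b * d2 w c d = 0 := by
  have hout : ∀ x ∉ S, ∀ y ∉ S, x = y := fun x hx y hy =>
    Finset.card_le_one.1 hS x (Finset.mem_compl.2 hx) y (Finset.mem_compl.2 hy)
  by_contra hne
  obtain ⟨hab₀, hcd₀⟩ := mul_ne_zero_iff.1 hne
  have h₁ : a ∉ S ∨ b ∉ S := by by_contra! h; exact hab₀ (hw a b h.1 h.2 hab)
  have h₂ : c ∉ S ∨ d ∉ S := by by_contra! h; exact hcd₀ (hw c d h.1 h.2 hcd)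
  rcases h₁ with h₁ | h₁ <;> rcases h₂ with h₂ | h₂ <;> exact absurd (hout _ h₁ _ h₂) ‹_›

end Determinant

theorem exists_third_of_pairings {β : Type*} {f : Fin 4 → β}
    (h : (f 0 = f 1 ∨ f 2 = f 3) ∨ (f 0 = f 2 ∨ f 3 = f 1) ∨ (f 0 = f 3 ∨ f 1 = f 2) →
      (f 0 = f 1 ∨ f 2 = f 3) ∧ (f 0 = f 2 ∨ f 3 = f 1) ∧ (f 0 = f 3 ∨ f 1 = f 2))
    {x y : Fin 4} (hxy : x ≠ y) (hf : f x = f y) : ∃ z, z ≠ x ∧ z ≠ y ∧ f x = f z := by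
  fin_cases x <;> fin_cases y <;> grind

theorem exists_four_eq_of_exists_third {α β : Type*} {f : α → β}
    (hthird : ∀ k x y, x ≠ k → y ≠ k → x ≠ y → f x = f y →
      ∃ z, z ≠ k ∧ z ≠ x ∧ z ≠ y ∧ f x = f z)
    {i j k : α} (hij : i ≠ j) (hki : k ≠ i) (hkj : k ≠ j) (hf : f i = f j) :
    ∃ a b c d, a ≠ b ∧ a ≠ c ∧ a ≠ d ∧ b ≠ c ∧ b ≠ d ∧ c ≠ d ∧
      f a = f b ∧ f a = f c ∧ f a = f d := by
  obtain ⟨z, -, hzi, hzj, hz⟩ := hthird k i j hki.symm hkj.symm hij hf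
  obtain ⟨z', hz'i, hz'j, hz'z, hz'⟩ := hthird i j z hij.symm hzi hzj.symm (hf.symm.trans hz)
  exact ⟨i, j, z, z', hij, hzi.symm, hz'i.symm, hzj.symm, hz'j.symm, hz'z.symm, hf, hz,
    hf.trans hz'⟩

section CrossRatio
variable {K : Type*} [Field K]

theorem eq_zero_of_mul_add_mul_eq_zero {A B X Y Z : K} (hA : A ≠ 0) (hB : B ≠ 0) (hAB : A ≠ B)
    (h : A * X + B * Y = 0) (hXYZ : X + Y + Z = 0) (h0 : X = 0 ∨ Y = 0 ∨ Z = 0) :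
    X = 0 ∧ Y = 0 ∧ Z = 0 := by
  have hY : Y = 0 := by
    rcases h0 with hX | hY | hZ
    · simpa [hX, hB] using h
    · exact hY
    · have : (B - A) * Y = 0 := by linear_combination h - A * hXYZ + A * hZ
      exact (mul_eq_zero.1 this).resolve_left (sub_ne_zero.2 hAB.symm)
  have hX : X = 0 := by simpa [hY, hA] using h
  exact ⟨hX, hY, by linear_combination hXYZ - hX - hY⟩

/-- For `A`, `B`, `A - B` nonzero, this says that the cross-ratio
`d2 u 0 1 * d2 u 2 3 / (d2 u 0 2 * d2 u 1 3)` of the four points `u` is `B / A`. -/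
def CrossRatioEq (A B : K) (u : Fin 4 → Fin 2 → K) : Prop :=
  A * d2 u 0 1 * d2 u 2 3 + B * d2 u 0 2 * d2 u 3 1 = 0

theorem CrossRatioEq.smul_map {A B : K} {v : Fin 4 → Fin 2 → K} (h : CrossRatioEq A B v)
    (c : Fin 4 → K) (g : (Fin 2 → K) →ₗ[K] (Fin 2 → K)) :
    CrossRatioEq A B (fun i => c i • g (v i)) := by
  unfold CrossRatioEq at *
  simp only [d2_smul_map]
  linear_combination (c 0 * c 1 * c 2 * c 3 * LinearMap.det g ^ 2) * h

theorem CrossRatioEq.of_card_compl_le_one {m : ℕ} {w : Fin m → Fin 2 → K}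
    {S : Finset (Fin m)} (hS : Sᶜ.card ≤ 1) (hw : ∀ a b, a ∈ S → b ∈ S → a ≠ b → d2 w a b = 0)
    (A B : K) {q : Fin 4 → Fin m} (hq : q.Injective) : CrossRatioEq A B (w ∘ q) := by
  have h : ∀ a b c d : Fin 4, a ≠ b → a ≠ c → a ≠ d → b ≠ c → b ≠ d → c ≠ d →
      d2 (w ∘ q) a b * d2 (w ∘ q) c d = 0 := fun a b c d hab hac had hbc hbd hcd =>
    d2_mul_d2_eq_zero_of_card_compl_le_one hS hw (hq.ne hab) (hq.ne hac) (hq.ne had)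
      (hq.ne hbc) (hq.ne hbd) (hq.ne hcd)
  unfold CrossRatioEq
  linear_combination
    A * h 0 1 2 3 (by decide) (by decide) (by decide) (by decide) (by decide) (by decide) +
    B * h 0 2 3 1 (by decide) (by decide) (by decide) (by decide) (by decide) (by decide)

theorem CrossRatioEq.exists_third {A B : K} {u : Fin 4 → Fin 2 → K} (h : CrossRatioEq A B u)
    (hA : A ≠ 0) (hB : B ≠ 0) (hAB : A ≠ B) (hu : ∀ i, u i ≠ 0) {x y : Fin 4} (hxy : x ≠ y)
    (hd : d2 u x y = 0) : ∃ z, z ≠ x ∧ z ≠ y ∧ d2 u x z = 0 := by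
  have hf : ∀ i j, d2 u i j = 0 ↔
      Projectivization.mk K (u i) (hu i) = Projectivization.mk K (u j) (hu j) :=
    fun i j => d2_eq_zero_iff_mk_eq (hu i) (hu j)
  simp only [hf] at hd ⊢
  refine exists_third_of_pairings (f := fun i => Projectivization.mk K (u i) (hu i))
    (fun h0 => ?_) hxy hd
  simp only [← hf] at h0 ⊢
  simpa only [mul_eq_zero] using eq_zero_of_mul_add_mul_eq_zero hA hB hAB
    (by unfold CrossRatioEq at h; linear_combination h) (d2_plucker u 0 1 2 3)
    (by simpa only [mul_eq_zero] using h0)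

end CrossRatio

/-- `eqnQuad k` lists the indices other than `k`, in the order in which the `k`-th equation of
`vanishing_iff_rank_5` reads `CrossRatioEq (eqnCoeffA p₀ p₁ q₀ q₁ k) (eqnCoeffB p₀ p₁ q₀ q₁ k)`. -/
def eqnQuad : Fin 5 → Fin 4 → Fin 5 :=
  ![![1, 3, 4, 2], ![0, 3, 4, 2], ![0, 3, 4, 1], ![0, 2, 4, 1], ![0, 2, 3, 1]]

theorem eqnQuad_ne (k : Fin 5) (i : Fin 4) : eqnQuad k i ≠ k := by revert k i; decide

theorem eqnQuad_injective (k : Fin 5) : (eqnQuad k).Injective := by revert k; decide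

theorem exists_eqnQuad_eq {k x : Fin 5} (hx : x ≠ k) : ∃ i, eqnQuad k i = x := by
  revert k x; decide

section FivePoints
variable {K : Type*} [Field K]

section
variable (p₀ p₁ q₀ q₁ : K)

def eqnCoeffA : Fin 5 → K := ![q₀ * (p₁ - p₀), q₁ * (p₁ - p₀), p₀ * q₁, q₁, p₁]

def eqnCoeffB : Fin 5 → K := ![p₀ * (q₁ - q₀), p₁ * (q₁ - q₀), p₁ * q₀, q₀, p₀]

def stdConfig : Fin 5 → Fin 2 → K := ![![1, 0], ![0, 1], ![1, 1], ![p₀, p₁], ![q₀, q₁]]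

end

variable {p₀ p₁ q₀ q₁ : K}

theorem forall_crossRatioEq_iff {w : Fin 5 → Fin 2 → K} :
    (∀ k, CrossRatioEq (eqnCoeffA p₀ p₁ q₀ q₁ k) (eqnCoeffB p₀ p₁ q₀ q₁ k) (w ∘ eqnQuad k)) ↔
      (q₀ * (p₁ - p₀) * d2 w 1 3 * d2 w 4 2 + p₀ * (q₁ - q₀) * d2 w 1 4 * d2 w 2 3 = 0 ∧
       q₁ * (p₁ - p₀) * d2 w 0 3 * d2 w 4 2 + p₁ * (q₁ - q₀) * d2 w 0 4 * d2 w 2 3 = 0 ∧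
       p₀ * q₁ * d2 w 0 3 * d2 w 4 1 + p₁ * q₀ * d2 w 0 4 * d2 w 1 3 = 0 ∧
       q₁ * d2 w 0 2 * d2 w 4 1 + q₀ * d2 w 0 4 * d2 w 1 2 = 0 ∧
       p₁ * d2 w 0 2 * d2 w 3 1 + p₀ * d2 w 0 3 * d2 w 1 2 = 0) := by
  simp [Fin.forall_fin_succ, CrossRatioEq, eqnQuad, eqnCoeffA, eqnCoeffB, d2]

theorem eqnCoeff_ne (hp : p₀ * p₁ * (p₀ - p₁) ≠ 0) (hq : q₀ * q₁ * (q₀ - q₁) ≠ 0)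
    (hpq : p₀ * q₁ - p₁ * q₀ ≠ 0) (k : Fin 5) :
    eqnCoeffA p₀ p₁ q₀ q₁ k ≠ 0 ∧ eqnCoeffB p₀ p₁ q₀ q₁ k ≠ 0 ∧
      eqnCoeffA p₀ p₁ q₀ q₁ k ≠ eqnCoeffB p₀ p₁ q₀ q₁ k := by
  have h₀ : q₀ * (p₁ - p₀) ≠ p₀ * (q₁ - q₀) := fun h => hpq (by linear_combination -h)
  have h₁ : q₁ * (p₁ - p₀) ≠ p₁ * (q₁ - q₀) := fun h => hpq (by linear_combination -h)
  have h₂ : p₀ * q₁ ≠ p₁ * q₀ := sub_ne_zero.1 hpq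
  simp only [ne_eq, mul_eq_zero, sub_eq_zero, not_or] at hp hq
  fin_cases k <;> simp [eqnCoeffA, eqnCoeffB, sub_eq_zero, Ne.symm hp.2, Ne.symm hq.2, *]

theorem crossRatioEq_stdConfig (k : Fin 5) :
    CrossRatioEq (eqnCoeffA p₀ p₁ q₀ q₁ k) (eqnCoeffB p₀ p₁ q₀ q₁ k)
      (stdConfig p₀ p₁ q₀ q₁ ∘ eqnQuad k) := by
  fin_cases k <;>
  · simp only [CrossRatioEq, d2, stdConfig, eqnQuad, eqnCoeffA, eqnCoeffB, Function.comp_apply,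
      Fin.zero_eta, Fin.mk_one, Fin.reduceFinMk, Fin.isValue, Matrix.cons_val, Matrix.cons_val_zero,
      Matrix.cons_val_one, Matrix.cons_val_fin_one]
    ring

theorem exists_four_of_crossRatioEq {A B : Fin 5 → K}
    (hAB : ∀ k, A k ≠ 0 ∧ B k ≠ 0 ∧ A k ≠ B k) {w : Fin 5 → Fin 2 → K} (hw : ∀ i, w i ≠ 0)
    (h : ∀ k, CrossRatioEq (A k) (B k) (w ∘ eqnQuad k)) {i j : Fin 5} (hij : i ≠ j)
    (hd : d2 w i j = 0) :
    ∃ a b c d : Fin 5, a ≠ b ∧ a ≠ c ∧ a ≠ d ∧ b ≠ c ∧ b ≠ d ∧ c ≠ d ∧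
      ∀ x y : Fin 5, x ∈ ({a, b, c, d} : Finset (Fin 5)) →
        y ∈ ({a, b, c, d} : Finset (Fin 5)) → x ≠ y → d2 w x y = 0 := by
  set f := fun i => Projectivization.mk K (w i) (hw i)
  have hf : ∀ i j, d2 w i j = 0 ↔ f i = f j := fun i j => d2_eq_zero_iff_mk_eq (hw i) (hw j)
  have hthird : ∀ k x y, x ≠ k → y ≠ k → x ≠ y → f x = f y →
      ∃ z, z ≠ k ∧ z ≠ x ∧ z ≠ y ∧ f x = f z := by
    intro k x y hx hy hxy hfxy
    obtain ⟨x', rfl⟩ := exists_eqnQuad_eq hx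
    obtain ⟨y', rfl⟩ := exists_eqnQuad_eq hy
    obtain ⟨z', hz'x, hz'y, hz'⟩ := (h k).exists_third (hAB k).1 (hAB k).2.1 (hAB k).2.2
      (fun _ => hw _) (ne_of_apply_ne _ hxy) ((hf _ _).2 hfxy)
    exact ⟨eqnQuad k z', eqnQuad_ne k z', (eqnQuad_injective k).ne hz'x,
      (eqnQuad_injective k).ne hz'y, (hf _ _).1 hz'⟩
  obtain ⟨k, hki, hkj⟩ : ∃ k : Fin 5, k ≠ i ∧ k ≠ j := by
    have : ∀ i j : Fin 5, ∃ k, k ≠ i ∧ k ≠ j := by decide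
    exact this i j
  obtain ⟨a, b, c, d, hab, hac, had, hbc, hbd, hcd, hb, hc, hd⟩ :=
    exists_four_eq_of_exists_third hthird hij hki hkj ((hf i j).1 hd)
  have hS : ∀ z ∈ ({a, b, c, d} : Finset (Fin 5)), f a = f z := by
    simp only [Finset.forall_mem_insert, Finset.mem_singleton, forall_eq, true_and]
    exact ⟨hb, hc, hd⟩
  exact ⟨a, b, c, d, hab, hac, had, hbc, hbd, hcd, fun x y hx hy _ =>
    (hf x y).2 ((hS x hx).symm.trans (hS y hy))⟩

theorem exists_linearEquiv_of_d2_ne_zero (hp₀ : p₀ ≠ 0) (hq₀ : q₀ ≠ 0)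
    {w : Fin 5 → Fin 2 → K} (hw : ∀ i, w i ≠ 0)
    (h₀₁ : d2 w 0 1 ≠ 0) (h₀₂ : d2 w 0 2 ≠ 0) (h₁₂ : d2 w 1 2 ≠ 0)
    (h₄ : q₁ * d2 w 0 2 * d2 w 4 1 + q₀ * d2 w 0 4 * d2 w 1 2 = 0)
    (h₅ : p₁ * d2 w 0 2 * d2 w 3 1 + p₀ * d2 w 0 3 * d2 w 1 2 = 0) :
    ∃ g : (Fin 2 → K) ≃ₗ[K] (Fin 2 → K), ∃ c₀ c₁ c₂ c₃ c₄ : K,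
      c₀ ≠ 0 ∧ c₁ ≠ 0 ∧ c₂ ≠ 0 ∧ c₃ ≠ 0 ∧ c₄ ≠ 0 ∧
      w 0 = c₀ • g ![1, 0] ∧ w 1 = c₁ • g ![0, 1] ∧ w 2 = c₂ • g ![1, 1] ∧
      w 3 = c₃ • g ![p₀, p₁] ∧ w 4 = c₄ • g ![q₀, q₁] := by
  obtain ⟨g, hg⟩ := exists_linearEquiv_apply_eq (d2 w 2 1 • w 0) (d2 w 0 2 • w 1) (by
    have : d2 w 2 1 * d2 w 0 2 * d2 w 0 1 ≠ 0 := by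
      refine mul_ne_zero (mul_ne_zero ?_ h₀₂) h₀₁
      rwa [d2_swap, neg_ne_zero]
    simp only [Pi.smul_apply, smul_eq_mul]
    convert this using 1; simp only [d2]; ring)
  -- the second hypothesis of `key` is `d2 ![w k, g ![a, b]] 0 1 = 0`, written out
  have key : ∀ k (a b : K), a ≠ 0 ∨ b ≠ 0 →
      a * d2 w 2 1 * d2 w k 0 + b * d2 w 0 2 * d2 w k 1 = 0 →
      ∃ c : K, c ≠ 0 ∧ w k = c • g ![a, b] := by
    intro k a b hab h
    have hab : ![a, b] ≠ 0 := fun h0 => by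
      rcases hab with ha | hb
      exacts [ha (congr_fun h0 0), hb (congr_fun h0 1)]
    obtain ⟨c, hc⟩ := exists_smul_eq_of_det_eq_zero (u := w k) (g.map_ne_zero_iff.2 hab) (by
      simp only [hg, Pi.add_apply, Pi.smul_apply, smul_eq_mul, Matrix.cons_val_zero,
        Matrix.cons_val_one, Matrix.cons_val_fin_one]
      simp only [d2] at h ⊢; linear_combination h)
    exact ⟨c, by rintro rfl; exact hw k (by simp [← hc]), hc.symm⟩
  obtain ⟨c₀, hc₀, e₀⟩ := key 0 1 0 (by simp) (by simp [d2_self])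
  obtain ⟨c₁, hc₁, e₁⟩ := key 1 0 1 (by simp) (by simp [d2_self])
  obtain ⟨c₂, hc₂, e₂⟩ := key 2 1 1 (by simp) (by rw [d2_swap w 0 2]; ring)
  obtain ⟨c₃, hc₃, e₃⟩ := key 3 p₀ p₁ (.inl hp₀) (by simp only [d2] at h₅ ⊢; linear_combination h₅)
  obtain ⟨c₄, hc₄, e₄⟩ := key 4 q₀ q₁ (.inl hq₀) (by simp only [d2] at h₄ ⊢; linear_combination h₄)
  exact ⟨g, c₀, c₁, c₂, c₃, c₄, hc₀, hc₁, hc₂, hc₃, hc₄, e₀, e₁, e₂, e₃, e₄⟩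

end FivePoints

theorem vanishing_iff_rank_5_general (K : Type*) [Field K]
    (p₀ p₁ q₀ q₁ : K)
    (hp : p₀ * p₁ * (p₀ - p₁) ≠ 0) (hq : q₀ * q₁ * (q₀ - q₁) ≠ 0)
    (hpq : p₀ * q₁ - p₁ * q₀ ≠ 0)
    (w : Fin 5 → Fin 2 → K) (hw : ∀ i, w i ≠ 0) :
    (q₀ * (p₁ - p₀) * d2 w 1 3 * d2 w 4 2 + p₀ * (q₁ - q₀) * d2 w 1 4 * d2 w 2 3 = 0 ∧
     q₁ * (p₁ - p₀) * d2 w 0 3 * d2 w 4 2 + p₁ * (q₁ - q₀) * d2 w 0 4 * d2 w 2 3 = 0 ∧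
     p₀ * q₁ * d2 w 0 3 * d2 w 4 1 + p₁ * q₀ * d2 w 0 4 * d2 w 1 3 = 0 ∧
     q₁ * d2 w 0 2 * d2 w 4 1 + q₀ * d2 w 0 4 * d2 w 1 2 = 0 ∧
     p₁ * d2 w 0 2 * d2 w 3 1 + p₀ * d2 w 0 3 * d2 w 1 2 = 0) ↔
      ((∃ g : (Fin 2 → K) ≃ₗ[K] (Fin 2 → K), ∃ c₀ c₁ c₂ c₃ c₄ : K,
          c₀ ≠ 0 ∧ c₁ ≠ 0 ∧ c₂ ≠ 0 ∧ c₃ ≠ 0 ∧ c₄ ≠ 0 ∧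
          w 0 = c₀ • g ![1, 0] ∧ w 1 = c₁ • g ![0, 1] ∧ w 2 = c₂ • g ![1, 1] ∧
          w 3 = c₃ • g ![p₀, p₁] ∧ w 4 = c₄ • g ![q₀, q₁]) ∨
       (∃ i j k l : Fin 5, i ≠ j ∧ i ≠ k ∧ i ≠ l ∧ j ≠ k ∧ j ≠ l ∧ k ≠ l ∧
          ∀ a b : Fin 5, a ∈ ({i, j, k, l} : Finset (Fin 5)) →
            b ∈ ({i, j, k, l} : Finset (Fin 5)) → a ≠ b → d2 w a b = 0)) := by
  rw [← forall_crossRatioEq_iff]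
  constructor
  · intro h
    by_cases hdeg : ∃ i j : Fin 5, i ≠ j ∧ d2 w i j = 0
    · obtain ⟨i, j, hij, hd⟩ := hdeg
      exact .inr (exists_four_of_crossRatioEq (eqnCoeff_ne hp hq hpq) hw h hij hd)
    · push Not at hdeg
      exact .inl (exists_linearEquiv_of_d2_ne_zero (left_ne_zero_of_mul (left_ne_zero_of_mul hp))
        (left_ne_zero_of_mul (left_ne_zero_of_mul hq)) hw (hdeg 0 1 (by decide))
        (hdeg 0 2 (by decide)) (hdeg 1 2 (by decide)) (h 3) (h 4))
  · rintro (⟨g, c₀, c₁, c₂, c₃, c₄, -, -, -, -, -, h₀, h₁, h₂, h₃, h₄⟩ |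
      ⟨i, j, k, l, hij, hik, hil, hjk, hjl, hkl, hS⟩) e
    · have horbit : w = fun i => ![c₀, c₁, c₂, c₃, c₄] i • g (stdConfig p₀ p₁ q₀ q₁ i) := by
        funext i; fin_cases i <;> assumption
      subst horbit
      exact (crossRatioEq_stdConfig e).smul_map _ _
    · have hcard : ({i, j, k, l} : Finset (Fin 5))ᶜ.card ≤ 1 := by
        rw [Finset.card_compl]
        simp [Finset.card_insert_of_notMem, hij, hik, hil, hjk, hjl, hkl]
      exact CrossRatioEq.of_card_compl_le_one hcard hS _ _ (eqnQuad_injective e)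

/-- the simultaneous vanishing of the five listed polynomials characterises the
closure of the orbit of `(e₀, e₁, e₀+e₁, p₀e₀+p₁e₁, q₀e₀+q₁e₁)`. -/
theorem vanishing_iff_rank_5 (K : Type*) [Field K] [IsAlgClosed K] [CharZero K]
    (p₀ p₁ q₀ q₁ : K)
    (hp : p₀ * p₁ * (p₀ - p₁) ≠ 0) (hq : q₀ * q₁ * (q₀ - q₁) ≠ 0)
    (hpq : p₀ * q₁ - p₁ * q₀ ≠ 0)
    (w : Fin 5 → Fin 2 → K) (hw : ∀ i, w i ≠ 0) :
    (q₀ * (p₁ - p₀) * d2 w 1 3 * d2 w 4 2 + p₀ * (q₁ - q₀) * d2 w 1 4 * d2 w 2 3 = 0 ∧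
     q₁ * (p₁ - p₀) * d2 w 0 3 * d2 w 4 2 + p₁ * (q₁ - q₀) * d2 w 0 4 * d2 w 2 3 = 0 ∧
     p₀ * q₁ * d2 w 0 3 * d2 w 4 1 + p₁ * q₀ * d2 w 0 4 * d2 w 1 3 = 0 ∧
     q₁ * d2 w 0 2 * d2 w 4 1 + q₀ * d2 w 0 4 * d2 w 1 2 = 0 ∧
     p₁ * d2 w 0 2 * d2 w 3 1 + p₀ * d2 w 0 3 * d2 w 1 2 = 0) ↔
      ((∃ g : (Fin 2 → K) ≃ₗ[K] (Fin 2 → K), ∃ c₀ c₁ c₂ c₃ c₄ : K,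
          c₀ ≠ 0 ∧ c₁ ≠ 0 ∧ c₂ ≠ 0 ∧ c₃ ≠ 0 ∧ c₄ ≠ 0 ∧
          w 0 = c₀ • g ![1, 0] ∧ w 1 = c₁ • g ![0, 1] ∧ w 2 = c₂ • g ![1, 1] ∧
          w 3 = c₃ • g ![p₀, p₁] ∧ w 4 = c₄ • g ![q₀, q₁]) ∨
       (∃ i j k l : Fin 5, i ≠ j ∧ i ≠ k ∧ i ≠ l ∧ j ≠ k ∧ j ≠ l ∧ k ≠ l ∧
          ∀ a b : Fin 5, a ∈ ({i, j, k, l} : Finset (Fin 5)) →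
            b ∈ ({i, j, k, l} : Finset (Fin 5)) → a ≠ b → d2 w a b = 0)) :=
  vanishing_iff_rank_5_general K p₀ p₁ q₀ q₁ hp hq hpq w hw
end
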